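/- arXiv:1806.08693 — 3 statements merged into one kernel-verified Lean document; each statement's English description precedes it below -/
import Mathlib

section
/- Let s ≥ 1, let A ∈ ℝ^{s×s} be strictly lower triangular and b ∈ ℝ^s, and let K = [[A, 0], [bᵀ, 0]] ∈ ℝ^{(s+1)×(s+1)}, which is strictly lower triangular and hence nilpotent, so that I + rK is invertible for every real r. If there exists r₀ > 0 such that for every r ∈ (0, r₀] all entries of the matrix K(I + rK)^{-1} are nonnegative, then every entry of A and every entry of b is nonnegative. -/
open Matrix

/-- The matrix `K = [[A, 0], [bᵀ, 0]] ∈ ℝ^{(s+1)×(s+1)}` built from an `s × s`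
coefficient matrix `A` and a weight vector `b ∈ ℝ^s`. -/
def mkK {s : ℕ} (A : Matrix (Fin s) (Fin s) ℝ) (b : Fin s → ℝ) :
    Matrix (Fin (s + 1)) (Fin (s + 1)) ℝ :=
  Matrix.of fun i j =>
    if hj : (j : ℕ) < s then
      if hi : (i : ℕ) < s then A ⟨i, hi⟩ ⟨j, hj⟩ else b ⟨j, hj⟩
    else 0

/-! Since matrix inversion is continuous at `1`, `K (1 + r K)⁻¹ → K` as `r → 0⁺`; entrywise
nonnegativity is a closed condition, so it passes to the limit `K`, whose entries are those
of `A` and `b`. -/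

open Filter Topology

section

variable {n 𝕜 : Type*} [Fintype n] [DecidableEq n] [Field 𝕜] [TopologicalSpace 𝕜]
  [IsTopologicalDivisionRing 𝕜]

theorem Matrix.tendsto_mul_inv_one_add_smul (K : Matrix n n 𝕜) :
    Tendsto (fun r : 𝕜 => K * (1 + r • K)⁻¹) (𝓝 0) (𝓝 K) := by
  have hinv : ContinuousAt Inv.inv (1 : Matrix n n 𝕜) := by
    refine continuousAt_matrix_inv _ ?_
    simp only [det_one, Ring.inverse_eq_inv']
    exact continuousAt_inv₀ one_ne_zero
  have hpath : Tendsto (fun r : 𝕜 => 1 + r • K) (𝓝 0) (𝓝 1) := by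
    simpa using tendsto_const_nhds.add ((tendsto_id (x := 𝓝 (0 : 𝕜))).smul_const K)
  simpa using (hinv.tendsto.comp hpath).const_mul K

end

theorem Matrix.nonneg_of_forall_mul_inv_one_add_smul_nonneg {n : Type*} [Fintype n]
    [DecidableEq n] {K : Matrix n n ℝ} {r₀ : ℝ} (hr₀ : 0 < r₀)
    (hK : ∀ r : ℝ, 0 < r → r ≤ r₀ → ∀ i j, 0 ≤ (K * (1 + r • K)⁻¹) i j) (i j : n) :
    0 ≤ K i j := by
  have hlim := ((continuous_apply j).comp (continuous_apply i)).continuousAt.tendsto.comp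
    (K.tendsto_mul_inv_one_add_smul.mono_left (nhdsWithin_le_nhds (s := Set.Ioi 0)))
  refine ge_of_tendsto hlim ?_
  filter_upwards [Ioc_mem_nhdsGT hr₀] with r hr
  exact hK r hr.1 hr.2 i j

@[simp]
theorem mkK_castSucc_castSucc {s : ℕ} (A : Matrix (Fin s) (Fin s) ℝ) (b : Fin s → ℝ)
    (i j : Fin s) : mkK A b i.castSucc j.castSucc = A i j := by
  simp [mkK]

@[simp]
theorem mkK_last_castSucc {s : ℕ} (A : Matrix (Fin s) (Fin s) ℝ) (b : Fin s → ℝ)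
    (j : Fin s) : mkK A b (Fin.last s) j.castSucc = b j := by
  simp [mkK]

theorem positive_ssp_implies_nonneg_coefficients_general
    (s : ℕ)
    (A : Matrix (Fin s) (Fin s) ℝ) (b : Fin s → ℝ)
    (h : ∃ r₀ : ℝ, 0 < r₀ ∧ ∀ r : ℝ, 0 < r → r ≤ r₀ →
      ∀ i j : Fin (s + 1), 0 ≤ (mkK A b * (1 + r • mkK A b)⁻¹) i j) :
    (∀ i j : Fin s, 0 ≤ A i j) ∧ (∀ j : Fin s, 0 ≤ b j) := by
  obtain ⟨r₀, hr₀, hpos⟩ := h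
  have hK := nonneg_of_forall_mul_inv_one_add_smul_nonneg hr₀ hpos
  exact ⟨fun i j => by simpa using hK i.castSucc j.castSucc,
    fun j => by simpa using hK (Fin.last s) j.castSucc⟩

/-- If an explicit (strictly lower triangular) Runge–Kutta method has
`K(I + rK)⁻¹ ≥ 0` entrywise for all `r` in some interval `(0, r₀]` with `r₀ > 0`,
then all entries of `A` and `b` are nonnegative. -/
theorem positive_ssp_implies_nonneg_coefficients
    (s : ℕ) (hs : 1 ≤ s)
    (A : Matrix (Fin s) (Fin s) ℝ) (b : Fin s → ℝ)
    (hA : ∀ i j : Fin s, i ≤ j → A i j = 0)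
    (h : ∃ r₀ : ℝ, 0 < r₀ ∧ ∀ r : ℝ, 0 < r → r ≤ r₀ →
      ∀ i j : Fin (s + 1), 0 ≤ (mkK A b * (1 + r • mkK A b)⁻¹) i j) :
    (∀ i j : Fin s, 0 ≤ A i j) ∧ (∀ j : Fin s, 0 ≤ b j) :=
  positive_ssp_implies_nonneg_coefficients_general s A b h
end

section
/- For every integer s ≥ 2, the SSPERK(s,2) method satisfies the SSP conditions at parameter r = s − 1: with K = [[A, 0], [bᵀ, 0]] ∈ ℝ^{(s+1)×(s+1)}, every entry of K(I + (s−1)K)^{-1} is nonnegative and every component of (s−1)·K(I + (s−1)K)^{-1}e is at most 1, where e is the all-ones vector. Hence the SSP coefficient of SSPERK(s,2) is at least s − 1. -/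
open Matrix

/-!
With `r = s - 1`, the matrix `r K` is strictly lower triangular and constant along each
row below the diagonal: that constant is `1` in rows `i < s` and `r / s` in the last row. For such a
matrix `L`, whose rows are all `1` except possibly the last, `(1 + L)⁻¹ = 1 - S` where `S`
is the subdiagonal of `L`: indeed `L S = L - S` because every entry of `S` that meets a
nonzero entry of `L` equals `1`. Hence `r K (1 + r K)⁻¹ = L (1 - S) = S`, a nonnegative
matrix with row sums `0`, `1` or `r / s`, all at most `1`.
-/

section RowConst

variable {R : Type*} {n : ℕ}

def rowConstStrictLower [Zero R] (m : Fin n → R) : Matrix (Fin n) (Fin n) R :=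
  Matrix.of fun i j => if j < i then m i else 0

def subdiagonal [Zero R] (m : Fin n → R) : Matrix (Fin n) (Fin n) R :=
  Matrix.of fun i j => if (i : ℕ) = j + 1 then m i else 0

theorem Fin.sum_ite_val_eq [AddCommMonoid R] (a : ℕ) (c : R) :
    ∑ k : Fin n, (if (k : ℕ) = a then c else 0) = if a < n then c else 0 := by
  rw [Fin.sum_univ_eq_sum_range (fun k => if k = a then c else 0), Finset.sum_ite_eq']
  simp only [Finset.mem_range]

variable [Ring R] {m : Fin n → R}

theorem rowConstStrictLower_mul_subdiagonal (hm : ∀ k : Fin n, (k : ℕ) + 1 < n → m k = 1) :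
    rowConstStrictLower m * subdiagonal m = rowConstStrictLower m - subdiagonal m := by
  ext i j
  have hsummand : ∀ k : Fin n, rowConstStrictLower m i k * subdiagonal m k j =
      if (k : ℕ) = j + 1 then (if (j : ℕ) + 1 < i then m i else 0) else 0 := by
    intro k
    simp only [rowConstStrictLower, subdiagonal, of_apply, Fin.lt_def]
    by_cases hk : (k : ℕ) = j + 1
    · by_cases hji : (j : ℕ) + 1 < i
      · simp [hk, hji, hm k (by omega)]
      · simp [hk, hji]
    · simp [hk]
  rw [mul_apply, Finset.sum_congr rfl fun k _ => hsummand k, Fin.sum_ite_val_eq]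
  simp only [Matrix.sub_apply, rowConstStrictLower, subdiagonal, of_apply, Fin.lt_def]
  split_ifs <;> first | omega | simp

theorem one_add_rowConstStrictLower_mul_one_sub_subdiagonal
    (hm : ∀ k : Fin n, (k : ℕ) + 1 < n → m k = 1) :
    (1 + rowConstStrictLower m) * (1 - subdiagonal m) = 1 := by
  rw [add_mul, one_mul, mul_sub, mul_one, rowConstStrictLower_mul_subdiagonal hm]
  abel

theorem subdiagonal_mulVec_one (i : Fin n) :
    (subdiagonal m *ᵥ fun _ => 1) i = if (i : ℕ) = 0 then 0 else m i := by
  have hsummand : ∀ j : Fin n, subdiagonal m i j * 1 =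
      if (j : ℕ) = i - 1 then (if (i : ℕ) = 0 then 0 else m i) else 0 := by
    intro j
    simp only [subdiagonal, of_apply, mul_one]
    split_ifs <;> first | rfl | omega
  simp only [mulVec, dotProduct, hsummand, Fin.sum_ite_val_eq]
  split_ifs <;> first | rfl | omega

end RowConst

theorem smul_mkK_eq_rowConstStrictLower {s : ℕ} (hs : 1 < s) {A : Matrix (Fin s) (Fin s) ℝ}
    (hA : ∀ i j : Fin s, A i j = if (j : ℕ) < (i : ℕ) then 1 / ((s : ℝ) - 1) else 0)
    {b : Fin s → ℝ} (hb : ∀ j : Fin s, b j = 1 / (s : ℝ)) :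
    ((s : ℝ) - 1) • mkK A b =
      rowConstStrictLower fun i : Fin (s + 1) => if (i : ℕ) < s then 1 else ((s : ℝ) - 1) / s := by
  have hr : (s : ℝ) - 1 ≠ 0 := sub_ne_zero.mpr (by exact_mod_cast hs.ne')
  ext i j
  simp only [Matrix.smul_apply, mkK, rowConstStrictLower, of_apply, smul_eq_mul]
  by_cases hj : (j : ℕ) < s
  · by_cases hi : (i : ℕ) < s
    · by_cases hji : (j : ℕ) < i <;> simp [hj, hi, hA, hji, Fin.lt_def.not, hr]
    · have hji : j < i := Fin.lt_def.mpr (by omega)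
      simp [hj, hi, hb, hji, div_eq_mul_inv]
  · have hji : ¬ j < i := by rw [Fin.lt_def]; omega
    simp [hj, hji]

/-- The SSPERK(s,2) method (with `a_{ij} = 1/(s-1)` for `j < i`, `b_j = 1/s`)
satisfies the SSP conditions at `r = s - 1`: `K(I + (s-1)K)⁻¹ ≥ 0` entrywise and
`(s-1)K(I + (s-1)K)⁻¹ e ≤ e` componentwise; hence its SSP coefficient is at least `s - 1`. -/
theorem ssperk_s2_ssp_conditions
    (s : ℕ) (hs : 2 ≤ s)
    (A : Matrix (Fin s) (Fin s) ℝ)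
    (hA : ∀ i j : Fin s, A i j = if (j : ℕ) < (i : ℕ) then 1 / ((s : ℝ) - 1) else 0)
    (b : Fin s → ℝ) (hb : ∀ j : Fin s, b j = 1 / (s : ℝ)) :
    (∀ i j : Fin (s + 1),
      0 ≤ (mkK A b * (1 + ((s : ℝ) - 1) • mkK A b)⁻¹) i j) ∧
    (∀ i : Fin (s + 1),
      (((s : ℝ) - 1) • (mkK A b * (1 + ((s : ℝ) - 1) • mkK A b)⁻¹)).mulVec
        (fun _ => 1) i ≤ 1) := by
  have hsR : (2 : ℝ) ≤ s := by exact_mod_cast hs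
  have hr : (0 : ℝ) < (s : ℝ) - 1 := by linarith
  set m : Fin (s + 1) → ℝ := fun i => if (i : ℕ) < s then 1 else ((s : ℝ) - 1) / s with hm_def
  have hm : ∀ k : Fin (s + 1), (k : ℕ) + 1 < s + 1 → m k = 1 := fun k hk => if_pos (by omega)
  have hK := smul_mkK_eq_rowConstStrictLower (by omega) hA hb
  have hSSP : ((s : ℝ) - 1) • (mkK A b * (1 + ((s : ℝ) - 1) • mkK A b)⁻¹) = subdiagonal m := by
    rw [← Matrix.smul_mul, hK,
      inv_eq_right_inv (one_add_rowConstStrictLower_mul_one_sub_subdiagonal hm), mul_sub,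
      mul_one, rowConstStrictLower_mul_subdiagonal hm, sub_sub_cancel]
  have hm_nonneg (i) : 0 ≤ m i := by
    simp only [hm_def]; split_ifs
    exacts [zero_le_one, div_nonneg hr.le (by positivity)]
  have hm_le_one (i) : m i ≤ 1 := by
    simp only [hm_def]; split_ifs
    exacts [le_rfl, (div_le_one (by positivity)).mpr (by linarith)]
  refine ⟨fun i j => nonneg_of_mul_nonneg_right ?_ hr, fun i => ?_⟩
  · rw [← smul_eq_mul, ← Matrix.smul_apply, hSSP]
    simp only [subdiagonal, of_apply]; split_ifs
    exacts [hm_nonneg i, le_rfl]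
  · rw [hSSP, subdiagonal_mulVec_one]
    split_ifs
    exacts [zero_le_one, hm_le_one i]
end

section
/- The embedded weight vector b̃₂ = (1/4, 1/4, 1/4, 1/4)ᵀ for the SSPERK(4,3) method satisfies the second-order conditions b̃₂ᵀe = 1 and b̃₂ᵀc = 1/2, and violates both third-order conditions: b̃₂ᵀc² = 3/8 ≠ 1/3 and b̃₂ᵀ(c²/2 − Ac) = 1/16 ≠ 0, where c = (0, 1/2, 1, 1/2)ᵀ and A is the SSPERK(4,3) coefficient matrix. Hence b̃₂ is a non-defective second-order embedded method for SSPERK(4,3). -/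
open Matrix

/-- Coefficient matrix of the optimal SSPERK(4,3) method. -/
noncomputable def A43 : Matrix (Fin 4) (Fin 4) ℝ :=
  !![0, 0, 0, 0;
     1/2, 0, 0, 0;
     1/2, 1/2, 0, 0;
     1/6, 1/6, 1/6, 0]

/-- Abscissae of the optimal SSPERK(4,3) method, `c = A·e`. -/
noncomputable def c43 : Fin 4 → ℝ := ![0, 1/2, 1, 1/2]

/-- Embedded weights `b̃₂ = (1/4, 1/4, 1/4, 1/4)ᵀ` for SSPERK(4,3). -/
noncomputable def bt2 : Fin 4 → ℝ := ![1/4, 1/4, 1/4, 1/4]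

lemma bt2_eq_const : bt2 = fun _ => 1 / 4 := by
  ext j
  fin_cases j <;> rfl

lemma sum_bt2_mul (v : Fin 4 → ℝ) : ∑ j, bt2 j * v j = (∑ j, v j) / 4 := by
  rw [bt2_eq_const, ← Finset.mul_sum]
  ring

lemma A43_mulVec_c43 : A43 *ᵥ c43 = ![0, 0, 1 / 4, 1 / 4] := by
  ext i
  fin_cases i <;> norm_num [A43, c43, mulVec, dotProduct, Fin.sum_univ_four, cons_val_two, cons_val_three]

/-- The embedded weight vector `b̃₂ = (1/4, 1/4, 1/4, 1/4)ᵀ` for SSPERK(4,3)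
satisfies the second-order conditions `b̃₂ᵀe = 1`, `b̃₂ᵀc = 1/2` and violates both
third-order conditions: `b̃₂ᵀc² = 3/8 ≠ 1/3` and `b̃₂ᵀ(c²/2 − Ac) = 1/16 ≠ 0`;
hence `b̃₂` is a non-defective second-order embedded method. -/
theorem ssperk43_embedded_b2_nondefective_second_order :
    (∑ j : Fin 4, bt2 j = 1) ∧
    (∑ j : Fin 4, bt2 j * c43 j = 1 / 2) ∧
    (∑ j : Fin 4, bt2 j * (c43 j) ^ 2 = 3 / 8) ∧ ((3 : ℝ) / 8 ≠ 1 / 3) ∧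
    (∑ j : Fin 4, bt2 j * ((c43 j) ^ 2 / 2 - A43.mulVec c43 j) = 1 / 16) ∧
    ((1 : ℝ) / 16 ≠ 0) := by
  refine ⟨?_, ?_, ?_, by norm_num, ?_, by norm_num⟩
  · simp only [bt2_eq_const, Finset.sum_const, Finset.card_univ, Fintype.card_fin]
    norm_num
  · rw [sum_bt2_mul]
    norm_num [c43, Fin.sum_univ_four, cons_val_two, cons_val_three]
  · rw [sum_bt2_mul]
    norm_num [c43, Fin.sum_univ_four, cons_val_two, cons_val_three]
  · rw [sum_bt2_mul, A43_mulVec_c43]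
    norm_num [c43, Fin.sum_univ_four, cons_val_two, cons_val_three]
end
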